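/- (Inequalities (15)–(18) in the proof of Theorem 2) Consider a k-user memoryless interference channel given by a Markov kernel K from (ℝⁿ)^k to 𝒴₁. Fix ε with 0 < ε ≤ 1, and for each i = 1, …, k let μ_i′ and μ_i″ be probability measures on ℝⁿ and let X_i be the time-sharing input that equals X_i′ ~ μ_i′ when Q_i = 0 and X_i″ ~ μ_i″ when Q_i = 1, where Q₁, …, Q_k are independent Bernoulli(ε) variables and X₁, …, X_k are independent. Let Y₁ be the channel output when (X₁, …, X_k) is the input, and let Y₁′ be the output of the primary channel K̄′(·|x₁) = ∫⋯∫ K(·|x₁, x₂, …, x_k) dμ₂′(x₂)⋯dμ_k′(x_k) with input X₁′ ~ μ₁′. Then I(X₁; Y₁) ≥ (1 − ε)^k I(X₁′; Y₁′) − (k − 1) H₂(ε), where H₂(u) = −u log₂ u − (1 − u) log₂(1 − u) is the binary entropy function. -/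

import Mathlib

open MeasureTheory ProbabilityTheory
open scoped ENNReal NNReal

/-- Kullback–Leibler divergence between two measures, valued in `ℝ≥0∞`. -/
noncomputable def klDiv {Ω : Type*} [MeasurableSpace Ω] (μ ν : Measure Ω) : ℝ≥0∞ :=
  open scoped Classical in
  if μ ≪ ν ∧ Integrable (llr μ ν) μ then ENNReal.ofReal (∫ x, llr μ ν x ∂μ) else ⊤

/-- Mutual information `I(X₁;Y₁)` between the primary input `X₁` and the primary output `Y₁`
of a `k`-user memoryless interference channel `K`, when the `k` inputs are independent with
laws `μs i`.  The joint law of `(X₁, Y₁)` is the pushforward of `(Measure.pi μs) ⊗ₘ K` under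
`(x, y) ↦ (x 0, y)`; this equals the mutual information `I(μs 0, K̄)` of the primary channel
`K̄(·|x₁) = ∫⋯∫ K(·|x₁, x₂, …, x_k) dμs(x₂)⋯dμs(x_k)`. -/
noncomputable def primaryMI {k : ℕ} [NeZero k] {𝒳 𝒴 : Type*} [MeasurableSpace 𝒳]
    [MeasurableSpace 𝒴] (K : Kernel (Fin k → 𝒳) 𝒴) (μs : Fin k → Measure 𝒳) : ℝ≥0∞ :=
  klDiv (((Measure.pi μs) ⊗ₘ K).map (fun p => (p.1 0, p.2)))
    (((((Measure.pi μs) ⊗ₘ K).map (fun p => (p.1 0, p.2))).fst).prod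
      ((((Measure.pi μs) ⊗ₘ K).map (fun p => (p.1 0, p.2))).snd))

/-- The binary entropy function `H₂(u) = −u log₂ u − (1 − u) log₂ (1 − u)`. -/
noncomputable def binaryEntropy (u : ℝ) : ℝ :=
  -(u * Real.logb 2 u) - (1 - u) * Real.logb 2 (1 - u)

/-!
Let `P` be the joint law of `(X₁, Y₁)` and `i_P = log dP/d(P₁ ⊗ P₂)` its information density, so
that `I(P) = ∫ i_P dP`. If `Q` is a component of `P`, i.e. `c • Q ≤ P` for some `c > 0`, then
`∫ i_P dQ = I(Q) + D(Q₁ ‖ P₁) + D(Q₂ ‖ P₂) - D(Q ‖ P)` and `D(Q ‖ P) ≤ log c⁻¹`.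
Time sharing of one user splits `P = (1 - ε) Q + ε Q'`, and integrating `i_P` against this
splitting gives `I(P) ≥ (1 - ε) I(Q) - h(ε)`, where `h` is the binary entropy in nats. For the
primary user, `Q` and `Q'` have densities with respect to `P` depending on `x₁` only, so
`D(Q ‖ P) = D(Q₁ ‖ P₁)` and nothing is lost: `I(P) ≥ (1 - ε) I(Q)`. Switching the `k - 1`
interferers to `μ'` one at a time and then the primary user gives the bound, as `h ≤ H₂`.
-/

lemma Real.log_toReal_mul {a b : ℝ≥0∞} (ha₀ : 0 < a) (ha : a < ∞) (hb₀ : 0 < b) (hb : b < ∞) :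
    Real.log (a * b).toReal = Real.log a.toReal + Real.log b.toReal := by
  rw [ENNReal.toReal_mul,
    Real.log_mul (ENNReal.toReal_pos ha₀.ne' ha.ne).ne' (ENNReal.toReal_pos hb₀.ne' hb.ne).ne']

section LogLikelihoodRatio

open Real

variable {α : Type*} {mα : MeasurableSpace α} {μ ν ξ : Measure α}

lemma absolutelyContinuous_of_smul_le {c : ℝ≥0∞} (hc : c ≠ 0) (h : c • μ ≤ ν) : μ ≪ ν :=
  (Measure.absolutelyContinuous_smul hc).trans (Measure.absolutelyContinuous_of_le h)

lemma toReal_rnDeriv_le_of_smul_le [IsFiniteMeasure μ] [SigmaFinite ν] {c : ℝ} (hc : 0 < c)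
    (h : ENNReal.ofReal c • μ ≤ ν) : ∀ᵐ x ∂ν, (μ.rnDeriv ν x).toReal ≤ c⁻¹ := by
  filter_upwards [Measure.rnDeriv_le_one_of_le h,
    Measure.rnDeriv_smul_left_of_ne_top μ ν ENNReal.ofReal_ne_top] with x hle hsmul
  rw [hsmul, Pi.smul_apply, smul_eq_mul, Pi.one_apply, mul_comm,
    ← ENNReal.le_inv_iff_mul_le, ← ENNReal.ofReal_inv_of_pos hc] at hle
  exact ENNReal.toReal_le_of_le_ofReal (inv_nonneg.mpr hc.le) hle

lemma llr_le_log_inv_of_smul_le [IsFiniteMeasure μ] [IsFiniteMeasure ν] {c : ℝ} (hc : 0 < c)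
    (h : ENNReal.ofReal c • μ ≤ ν) : ∀ᵐ x ∂μ, llr μ ν x ≤ log c⁻¹ := by
  have hμν := absolutelyContinuous_of_smul_le (by simpa using hc) h
  filter_upwards [Measure.rnDeriv_pos hμν, hμν.ae_le (Measure.rnDeriv_lt_top μ ν),
    hμν.ae_le (toReal_rnDeriv_le_of_smul_le hc h)] with x hpos hlt hle
  exact log_le_log (ENNReal.toReal_pos hpos.ne' hlt.ne) hle

lemma integrable_llr_of_smul_le [IsFiniteMeasure μ] [IsFiniteMeasure ν] {c : ℝ} (hc : 0 < c)
    (h : ENNReal.ofReal c • μ ≤ ν) : Integrable (llr μ ν) μ := by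
  have hμν := absolutelyContinuous_of_smul_le (by simpa using hc) h
  rw [← InformationTheory.integrable_klFun_rnDeriv_iff hμν]
  -- `klFun` is bounded on the range `[0, c⁻¹]` of the density
  obtain ⟨C, hC⟩ := isCompact_Icc.exists_bound_of_continuousOn
    InformationTheory.continuous_klFun.continuousOn (s := Set.Icc 0 c⁻¹)
  refine Integrable.of_bound ((InformationTheory.measurable_klFun.comp
    (Measure.measurable_rnDeriv μ ν).ennreal_toReal).aestronglyMeasurable) C ?_
  filter_upwards [toReal_rnDeriv_le_of_smul_le hc h] with x hx
  exact hC _ ⟨ENNReal.toReal_nonneg, hx⟩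

lemma integral_llr_le_log_inv_of_smul_le [IsProbabilityMeasure μ] [IsFiniteMeasure ν] {c : ℝ}
    (hc : 0 < c) (h : ENNReal.ofReal c • μ ≤ ν) : ∫ x, llr μ ν x ∂μ ≤ log c⁻¹ := by
  simpa using integral_mono_ae (integrable_llr_of_smul_le hc h) (integrable_const _)
    (llr_le_log_inv_of_smul_le hc h)

lemma integral_llr_nonneg [IsProbabilityMeasure μ] [IsProbabilityMeasure ν] (hμν : μ ≪ ν)
    (hint : Integrable (llr μ ν) μ) : 0 ≤ ∫ x, llr μ ν x ∂μ := by
  simpa using InformationTheory.integral_llr_add_sub_measure_univ_nonneg hμν hint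

lemma llr_add_llr [SigmaFinite μ] [SigmaFinite ν] [SigmaFinite ξ] (hμν : μ ≪ ν) (hνξ : ν ≪ ξ) :
    llr μ ξ =ᵐ[μ] llr μ ν + llr ν ξ := by
  filter_upwards [(hμν.trans hνξ).ae_le (Measure.rnDeriv_mul_rnDeriv hμν (κ := ξ)),
    Measure.rnDeriv_pos hμν, hμν.ae_le (Measure.rnDeriv_pos hνξ),
    hμν.ae_le (Measure.rnDeriv_lt_top μ ν), (hμν.trans hνξ).ae_le (Measure.rnDeriv_lt_top ν ξ)]
    with x hmul hpos₁ hpos₂ hlt₁ hlt₂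
  rw [Pi.add_apply, llr, llr, llr, ← hmul, Pi.mul_apply, log_toReal_mul hpos₁ hlt₁ hpos₂ hlt₂]

lemma Measure.restrict_rnDeriv_ne_zero_absolutelyContinuous [μ.HaveLebesgueDecomposition ν]
    (hμν : μ ≪ ν) :
    ν.restrict {x | μ.rnDeriv ν x ≠ 0} ≪ μ := by
  have hS : MeasurableSet {x | μ.rnDeriv ν x ≠ 0} :=
    (Measure.measurable_rnDeriv μ ν (measurableSet_singleton 0)).compl
  have hle : (ν.restrict {x | μ.rnDeriv ν x ≠ 0}).withDensity (μ.rnDeriv ν) ≤ μ := by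
    rw [← restrict_withDensity hS, Measure.withDensity_rnDeriv_eq μ ν hμν]
    exact Measure.restrict_le_self
  exact (withDensity_absolutelyContinuous' (Measure.measurable_rnDeriv μ ν).aemeasurable
    (ae_restrict_mem hS)).trans (Measure.absolutelyContinuous_of_le hle)

end LogLikelihoodRatio

section Product

variable {X Y : Type*} [MeasurableSpace X] [MeasurableSpace Y]

lemma absolutelyContinuous_fst_prod_snd {π : Measure (X × Y)} {ν₁ : Measure X} {ν₂ : Measure Y}
    [IsFiniteMeasure π] [SigmaFinite ν₁] [SigmaFinite ν₂] (h : π ≪ ν₁.prod ν₂) :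
    π ≪ π.fst.prod π.snd := by
  have h₁ : π.fst ≪ ν₁ :=
    (h.map measurable_fst).trans Measure.quasiMeasurePreserving_fst.absolutelyContinuous
  have h₂ : π.snd ≪ ν₂ :=
    (h.map measurable_snd).trans Measure.quasiMeasurePreserving_snd.absolutelyContinuous
  set S₁ := {x | π.fst.rnDeriv ν₁ x ≠ 0}
  set S₂ := {y | π.snd.rnDeriv ν₂ y ≠ 0}
  -- `π` lives where both marginal densities are positive, and there `ν₁ ⊗ ν₂ ≪ π.fst ⊗ π.snd`
  have hπ : ∀ᵐ z ∂π, z ∈ S₁ ×ˢ S₂ := by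
    filter_upwards [ae_of_ae_map measurable_fst.aemeasurable (Measure.rnDeriv_pos h₁),
      ae_of_ae_map measurable_snd.aemeasurable (Measure.rnDeriv_pos h₂)] with z hz₁ hz₂
    exact ⟨hz₁.ne', hz₂.ne'⟩
  have hπ' : π.restrict (S₁ ×ˢ S₂) ≪ (ν₁.restrict S₁).prod (ν₂.restrict S₂) := by
    rw [Measure.prod_restrict]
    exact h.restrict _
  rw [Measure.restrict_eq_self_of_ae_mem hπ] at hπ'
  exact hπ'.trans ((Measure.restrict_rnDeriv_ne_zero_absolutelyContinuous h₁).prod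
    (Measure.restrict_rnDeriv_ne_zero_absolutelyContinuous h₂))

lemma llr_prod {μ₁ ν₁ : Measure X} {μ₂ ν₂ : Measure Y} [IsFiniteMeasure μ₁] [IsFiniteMeasure ν₁]
    [IsFiniteMeasure μ₂] [IsFiniteMeasure ν₂] (h₁ : μ₁ ≪ ν₁) (h₂ : μ₂ ≪ ν₂) :
    llr (μ₁.prod μ₂) (ν₁.prod ν₂) =ᵐ[μ₁.prod μ₂] fun z => llr μ₁ ν₁ z.1 + llr μ₂ ν₂ z.2 := by
  have hprod : μ₁.prod μ₂
      = (ν₁.prod ν₂).withDensity fun z => μ₁.rnDeriv ν₁ z.1 * μ₂.rnDeriv ν₂ z.2 := by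
    rw [← prod_withDensity (Measure.measurable_rnDeriv _ _) (Measure.measurable_rnDeriv _ _),
      Measure.withDensity_rnDeriv_eq _ _ h₁, Measure.withDensity_rnDeriv_eq _ _ h₂]
  have hrn : (μ₁.prod μ₂).rnDeriv (ν₁.prod ν₂)
      =ᵐ[ν₁.prod ν₂] fun z => μ₁.rnDeriv ν₁ z.1 * μ₂.rnDeriv ν₂ z.2 := by
    nth_rewrite 1 [hprod]
    exact Measure.rnDeriv_withDensity _ (by fun_prop)
  filter_upwards [(h₁.prod h₂).ae_le hrn,
    Measure.quasiMeasurePreserving_fst.ae (Measure.rnDeriv_pos h₁),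
    Measure.quasiMeasurePreserving_fst.ae (h₁.ae_le (Measure.rnDeriv_lt_top μ₁ ν₁)),
    Measure.quasiMeasurePreserving_snd.ae (Measure.rnDeriv_pos h₂),
    Measure.quasiMeasurePreserving_snd.ae (h₂.ae_le (Measure.rnDeriv_lt_top μ₂ ν₂))]
    with z hz hpos₁ hlt₁ hpos₂ hlt₂
  rw [llr, llr, llr, hz, Real.log_toReal_mul hpos₁ hlt₁ hpos₂ hlt₂]

end Product

section Components

variable {α β : Type*} {mα : MeasurableSpace α} {mβ : MeasurableSpace β} {μ ν : Measure α}

lemma MeasureTheory.Integrable.mono_measure_of_smul_le {f : α → ℝ} (hf : Integrable f ν) {c : ℝ}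
    (hc : 0 < c) (h : ENNReal.ofReal c • μ ≤ ν) : Integrable f μ := by
  have hc₀ : ENNReal.ofReal c ≠ 0 := by simpa using hc
  refine (hf.smul_measure (ENNReal.inv_ne_top.mpr hc₀)).mono_measure ?_
  calc μ = (ENNReal.ofReal c)⁻¹ • (ENNReal.ofReal c • μ) := by
        rw [smul_smul, ENNReal.inv_mul_cancel hc₀ ENNReal.ofReal_ne_top, one_smul]
    _ ≤ (ENNReal.ofReal c)⁻¹ • ν := by gcongr

lemma Measure.smul_map_le_of_smul_le {c : ℝ≥0∞} {f : α → β} (hf : Measurable f)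
    (h : c • μ ≤ ν) : c • μ.map f ≤ ν.map f := by
  simpa [Measure.map_smul] using Measure.map_mono h hf

lemma integral_llr_nonneg_of_smul_le [IsProbabilityMeasure μ] [IsProbabilityMeasure ν] {c : ℝ}
    (hc : 0 < c) (h : ENNReal.ofReal c • μ ≤ ν) : 0 ≤ ∫ x, llr μ ν x ∂μ :=
  integral_llr_nonneg (absolutelyContinuous_of_smul_le (by simpa using hc) h)
    (integrable_llr_of_smul_le hc h)

lemma integrable_llr_map_comp_of_smul_le [IsFiniteMeasure μ] [IsFiniteMeasure ν] {f : α → β}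
    (hf : Measurable f) {c : ℝ} (hc : 0 < c) (h : ENNReal.ofReal c • μ ≤ ν) :
    Integrable (fun x => llr (μ.map f) (ν.map f) (f x)) μ :=
  (integrable_map_measure (stronglyMeasurable_llr _ _).aestronglyMeasurable hf.aemeasurable).mp
    (integrable_llr_of_smul_le hc (Measure.smul_map_le_of_smul_le hf h))

lemma Measure.map_withDensity_comp {f : α → β} (hf : Measurable f) {g : β → ℝ≥0∞}
    (hg : Measurable g) : (μ.withDensity (fun x => g (f x))).map f = (μ.map f).withDensity g := by
  ext s hs
  rw [Measure.map_apply hf hs, withDensity_apply _ (hf hs), withDensity_apply _ hs,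
    setLIntegral_map hs hg hf]

lemma Measure.withDensity_compProd {π : Measure α} [SFinite π] (κ : Kernel α β) [IsSFiniteKernel κ]
    {φ : α → ℝ≥0∞} (hφ : Measurable φ) : π.withDensity φ ⊗ₘ κ = (π ⊗ₘ κ).withDensity fun p => φ p.1 := by
  refine Measure.ext_of_lintegral _ fun F hF => ?_
  rw [Measure.lintegral_compProd hF,
    lintegral_withDensity_eq_lintegral_mul _ hφ hF.lintegral_kernel_prod_right',
    lintegral_withDensity_eq_lintegral_mul _ (by fun_prop : Measurable fun p : α × β => φ p.1) hF,
    Measure.lintegral_compProd (by fun_prop)]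
  refine lintegral_congr fun x => ?_
  exact (lintegral_const_mul (φ x) (f := fun y => F (x, y)) (by fun_prop)).symm

end Components

section MutualInformation

variable {X Y : Type*} [MeasurableSpace X] [MeasurableSpace Y] {P Q : Measure (X × Y)}

noncomputable def mutualInfo (P : Measure (X × Y)) : ℝ≥0∞ := klDiv P (P.fst.prod P.snd)

noncomputable def infoDensity (P : Measure (X × Y)) : X × Y → ℝ := llr P (P.fst.prod P.snd)

lemma mutualInfo_ne_top_iff :
    mutualInfo P ≠ ⊤ ↔ P ≪ P.fst.prod P.snd ∧ Integrable (infoDensity P) P := by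
  classical
  rw [mutualInfo, klDiv, infoDensity]
  split_ifs with h <;> simp [h]

lemma toReal_mutualInfo [IsProbabilityMeasure P] (hP : mutualInfo P ≠ ⊤) :
    (mutualInfo P).toReal = ∫ z, infoDensity P z ∂P := by
  obtain ⟨hac, hint⟩ := mutualInfo_ne_top_iff.mp hP
  classical
  rw [mutualInfo, klDiv, if_pos ⟨hac, hint⟩, ENNReal.toReal_ofReal (integral_llr_nonneg hac hint),
    infoDensity]

lemma infoDensity_ae_eq [IsFiniteMeasure P] [IsFiniteMeasure Q] (hQP : Q ≪ P)
    (hP : P ≪ P.fst.prod P.snd) :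
    infoDensity P =ᵐ[Q] fun z =>
      infoDensity Q z + llr Q.fst P.fst z.1 + llr Q.snd P.snd z.2 - llr Q P z := by
  have hfst : Q.fst ≪ P.fst := hQP.map measurable_fst
  have hsnd : Q.snd ≪ P.snd := hQP.map measurable_snd
  have hQ : Q ≪ Q.fst.prod Q.snd := absolutelyContinuous_fst_prod_snd (hQP.trans hP)
  filter_upwards [llr_add_llr hQP hP, llr_add_llr hQ (hfst.prod hsnd),
    hQ.ae_le (llr_prod hfst hsnd)] with z hchain hchain' hprod
  simp only [Pi.add_apply] at hchain hchain' hprod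
  rw [infoDensity, infoDensity]
  linarith

variable [IsProbabilityMeasure P] [IsProbabilityMeasure Q] {c : ℝ}

lemma mutualInfo_ne_top_of_smul_le (hc : 0 < c) (hle : ENNReal.ofReal c • Q ≤ P)
    (hP : mutualInfo P ≠ ⊤) : mutualInfo Q ≠ ⊤ := by
  obtain ⟨hPac, hPint⟩ := mutualInfo_ne_top_iff.mp hP
  have hQP : Q ≪ P := absolutelyContinuous_of_smul_le (by simpa using hc) hle
  refine mutualInfo_ne_top_iff.mpr ⟨absolutelyContinuous_fst_prod_snd (hQP.trans hPac), ?_⟩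
  refine ((((hPint.mono_measure_of_smul_le hc hle).sub
    (integrable_llr_map_comp_of_smul_le measurable_fst hc hle)).sub
    (integrable_llr_map_comp_of_smul_le measurable_snd hc hle)).add
    (integrable_llr_of_smul_le hc hle)).congr ?_
  filter_upwards [infoDensity_ae_eq hQP hPac] with z hz
  simp only [Pi.add_apply, Pi.sub_apply, hz, Measure.fst, Measure.snd]
  ring

lemma integral_infoDensity_of_smul_le (hc : 0 < c) (hle : ENNReal.ofReal c • Q ≤ P)
    (hP : mutualInfo P ≠ ⊤) :
    ∫ z, infoDensity P z ∂Q = (mutualInfo Q).toReal + (∫ x, llr Q.fst P.fst x ∂Q.fst)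
      + (∫ y, llr Q.snd P.snd y ∂Q.snd) - ∫ z, llr Q P z ∂Q := by
  have hQ := mutualInfo_ne_top_of_smul_le hc hle hP
  have hint₀ : Integrable (fun z => infoDensity Q z) Q := (mutualInfo_ne_top_iff.mp hQ).2
  have hint₁ : Integrable (fun z => llr Q.fst P.fst z.1) Q :=
    integrable_llr_map_comp_of_smul_le measurable_fst hc hle
  have hint₂ : Integrable (fun z => llr Q.snd P.snd z.2) Q :=
    integrable_llr_map_comp_of_smul_le measurable_snd hc hle
  have hint₀₁ : Integrable (fun z => infoDensity Q z + llr Q.fst P.fst z.1) Q := hint₀.add hint₁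
  have hint₀₁₂ : Integrable
      (fun z => infoDensity Q z + llr Q.fst P.fst z.1 + llr Q.snd P.snd z.2) Q :=
    hint₀₁.add hint₂
  rw [integral_congr_ae (infoDensity_ae_eq (absolutelyContinuous_of_smul_le (by simpa using hc) hle)
      (mutualInfo_ne_top_iff.mp hP).1),
    integral_sub hint₀₁₂ (integrable_llr_of_smul_le hc hle), integral_add hint₀₁ hint₂,
    integral_add hint₀ hint₁, toReal_mutualInfo hQ, Measure.fst, Measure.snd,
    integral_map measurable_fst.aemeasurable (stronglyMeasurable_llr _ _).aestronglyMeasurable,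
    integral_map measurable_snd.aemeasurable (stronglyMeasurable_llr _ _).aestronglyMeasurable]

end MutualInformation

section MutualInformationBounds

variable {X Y : Type*} [MeasurableSpace X] [MeasurableSpace Y] {P Q Q' : Measure (X × Y)}
  [IsProbabilityMeasure P] {ε : ℝ}

lemma integral_llr_withDensity_fst {g : X → ℝ≥0∞} (hg : Measurable g)
    (hQ : Q = P.withDensity fun z => g z.1) :
    ∫ z, llr Q P z ∂Q = ∫ x, llr Q.fst P.fst x ∂Q.fst := by
  have hQP : Q ≪ P := hQ ▸ withDensity_absolutelyContinuous P _
  have hrn : Q.rnDeriv P =ᵐ[P] fun z => g z.1 := hQ ▸ Measure.rnDeriv_withDensity P (by fun_prop)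
  have hQ_fst : Q.fst = P.fst.withDensity g := hQ ▸ Measure.map_withDensity_comp measurable_fst hg
  have hrn_fst : Q.fst.rnDeriv P.fst =ᵐ[P.fst] g := hQ_fst ▸ Measure.rnDeriv_withDensity _ hg
  have hllr : llr Q P =ᵐ[Q] fun z => llr Q.fst P.fst z.1 := by
    filter_upwards [hQP.ae_le hrn, hQP.ae_le (ae_of_ae_map measurable_fst.aemeasurable hrn_fst)]
      with z hz hz_fst
    rw [llr, llr, hz, hz_fst]
  rw [integral_congr_ae hllr, Measure.fst,
    integral_map measurable_fst.aemeasurable (stronglyMeasurable_llr _ _).aestronglyMeasurable]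

lemma toReal_mutualInfo_eq_add_integral (hε₀ : 0 < ε) (hε₁ : ε < 1)
    (hPQ : P = ENNReal.ofReal (1 - ε) • Q + ENNReal.ofReal ε • Q') (hP : mutualInfo P ≠ ⊤) :
    (mutualInfo P).toReal
      = (1 - ε) * ∫ z, infoDensity P z ∂Q + ε * ∫ z, infoDensity P z ∂Q' := by
  have hint := (mutualInfo_ne_top_iff.mp hP).2
  have hQ : ENNReal.ofReal (1 - ε) • Q ≤ P := by rw [hPQ]; exact Measure.le_add_right le_rfl
  have hQ' : ENNReal.ofReal ε • Q' ≤ P := by rw [hPQ]; exact Measure.le_add_left le_rfl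
  have hintQ := (hint.mono_measure_of_smul_le (sub_pos.mpr hε₁) hQ).smul_measure
    (ENNReal.ofReal_ne_top (r := 1 - ε))
  have hintQ' := (hint.mono_measure_of_smul_le hε₀ hQ').smul_measure
    (ENNReal.ofReal_ne_top (r := ε))
  rw [toReal_mutualInfo hP]
  set f := infoDensity P
  rw [hPQ, integral_add_measure hintQ hintQ', integral_smul_measure, integral_smul_measure,
    ENNReal.toReal_ofReal (sub_pos.mpr hε₁).le, ENNReal.toReal_ofReal hε₀.le, smul_eq_mul,
    smul_eq_mul]

variable [IsProbabilityMeasure Q] {c : ℝ}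

lemma toReal_mutualInfo_sub_log_inv_le (hc : 0 < c) (hle : ENNReal.ofReal c • Q ≤ P)
    (hP : mutualInfo P ≠ ⊤) :
    (mutualInfo Q).toReal - Real.log c⁻¹ ≤ ∫ z, infoDensity P z ∂Q := by
  rw [integral_infoDensity_of_smul_le hc hle hP]
  have h₁ : 0 ≤ ∫ x, llr Q.fst P.fst x ∂Q.fst :=
    integral_llr_nonneg_of_smul_le hc (Measure.smul_map_le_of_smul_le measurable_fst hle)
  have h₂ : 0 ≤ ∫ y, llr Q.snd P.snd y ∂Q.snd :=
    integral_llr_nonneg_of_smul_le hc (Measure.smul_map_le_of_smul_le measurable_snd hle)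
  linarith [integral_llr_le_log_inv_of_smul_le hc hle]

lemma toReal_mutualInfo_le_of_withDensity_fst (hc : 0 < c) (hle : ENNReal.ofReal c • Q ≤ P)
    (hP : mutualInfo P ≠ ⊤) {g : X → ℝ≥0∞} (hg : Measurable g)
    (hQ : Q = P.withDensity fun z => g z.1) :
    (mutualInfo Q).toReal ≤ ∫ z, infoDensity P z ∂Q := by
  rw [integral_infoDensity_of_smul_le hc hle hP, integral_llr_withDensity_fst hg hQ]
  have h₂ : 0 ≤ ∫ y, llr Q.snd P.snd y ∂Q.snd :=
    integral_llr_nonneg_of_smul_le hc (Measure.smul_map_le_of_smul_le measurable_snd hle)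
  linarith

variable [IsProbabilityMeasure Q']

lemma mul_toReal_mutualInfo_sub_binEntropy_le (hε₀ : 0 < ε) (hε₁ : ε < 1)
    (hPQ : P = ENNReal.ofReal (1 - ε) • Q + ENNReal.ofReal ε • Q') (hP : mutualInfo P ≠ ⊤) :
    (1 - ε) * (mutualInfo Q).toReal - Real.binEntropy ε ≤ (mutualInfo P).toReal := by
  have hbound := toReal_mutualInfo_sub_log_inv_le (sub_pos.mpr hε₁)
    (by rw [hPQ]; exact Measure.le_add_right le_rfl) hP
  have hbound' := toReal_mutualInfo_sub_log_inv_le hε₀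
    (by rw [hPQ]; exact Measure.le_add_left le_rfl) hP
  rw [toReal_mutualInfo_eq_add_integral hε₀ hε₁ hPQ hP, Real.binEntropy]
  nlinarith [ENNReal.toReal_nonneg (a := mutualInfo Q'),
    mul_le_mul_of_nonneg_left hbound (sub_pos.mpr hε₁).le, mul_le_mul_of_nonneg_left hbound' hε₀.le]

lemma mul_toReal_mutualInfo_le_of_withDensity_fst (hε₀ : 0 < ε) (hε₁ : ε < 1)
    (hPQ : P = ENNReal.ofReal (1 - ε) • Q + ENNReal.ofReal ε • Q') (hP : mutualInfo P ≠ ⊤)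
    {g g' : X → ℝ≥0∞} (hg : Measurable g) (hg' : Measurable g')
    (hQ : Q = P.withDensity fun z => g z.1) (hQ' : Q' = P.withDensity fun z => g' z.1) :
    (1 - ε) * (mutualInfo Q).toReal ≤ (mutualInfo P).toReal := by
  have hbound := toReal_mutualInfo_le_of_withDensity_fst (sub_pos.mpr hε₁)
    (by rw [hPQ]; exact Measure.le_add_right le_rfl) hP hg hQ
  have hbound' := toReal_mutualInfo_le_of_withDensity_fst hε₀
    (by rw [hPQ]; exact Measure.le_add_left le_rfl) hP hg' hQ'
  rw [toReal_mutualInfo_eq_add_integral hε₀ hε₁ hPQ hP]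
  nlinarith [ENNReal.toReal_nonneg (a := mutualInfo Q'),
    mul_le_mul_of_nonneg_left hbound (sub_pos.mpr hε₁).le, mul_le_mul_of_nonneg_left hbound' hε₀.le]

end MutualInformationBounds

section UpdatePi

open Function

variable {ι : Type*} [Fintype ι] [DecidableEq ι] {𝒳 : ι → Type*} [∀ i, MeasurableSpace (𝒳 i)]
  {μ : ∀ i, Measure (𝒳 i)} {i : ι} {β : Measure (𝒳 i)}

instance Measure.sigmaFinite_update [∀ j, SigmaFinite (μ j)] [SigmaFinite β] (j : ι) :
    SigmaFinite (update μ i β j) := by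
  rcases eq_or_ne j i with rfl | hj
  · rw [update_self]; infer_instance
  · rw [update_of_ne hj]; infer_instance

instance Measure.isProbabilityMeasure_update [∀ j, IsProbabilityMeasure (μ j)]
    [IsProbabilityMeasure β] (j : ι) : IsProbabilityMeasure (update μ i β j) := by
  rcases eq_or_ne j i with rfl | hj
  · rw [update_self]; infer_instance
  · rw [update_of_ne hj]; infer_instance

lemma Measure.prod_update_apply (s : ∀ j, Set (𝒳 j)) :
    ∏ j, update μ i β j (s j) = β (s i) * ∏ j ∈ Finset.univ.erase i, μ j (s j) := by
  rw [Finset.prod_congr rfl fun j _ => apply_update (fun j (m : Measure (𝒳 j)) => m (s j)) μ i β j,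
    Finset.prod_update_of_mem (Finset.mem_univ i), Finset.sdiff_singleton_eq_erase]

variable [∀ j, SigmaFinite (μ j)] [SigmaFinite β]

lemma Measure.pi_eq_add_of_apply_eq {a b : ℝ≥0∞} {γ : Measure (𝒳 i)} [SigmaFinite γ]
    (hμ : μ i = a • β + b • γ) :
    Measure.pi μ = a • Measure.pi (update μ i β) + b • Measure.pi (update μ i γ) := by
  refine Measure.pi_eq fun s hs => ?_
  rw [Measure.add_apply, Measure.smul_apply, Measure.smul_apply, Measure.pi_pi, Measure.pi_pi,
    Measure.prod_update_apply, Measure.prod_update_apply,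
    ← Finset.mul_prod_erase _ _ (Finset.mem_univ i),
    hμ, Measure.add_apply, Measure.smul_apply, Measure.smul_apply, smul_eq_mul, smul_eq_mul,
    smul_eq_mul, smul_eq_mul]
  ring

lemma Measure.pi_update_eq_withDensity {g : 𝒳 i → ℝ≥0∞} (hg : Measurable g)
    (hβ : β = (μ i).withDensity g) :
    Measure.pi (update μ i β) = (Measure.pi μ).withDensity fun x => g (x i) := by
  refine Measure.pi_eq fun s hs => ?_
  rw [withDensity_apply _ (MeasurableSet.univ_pi hs), Measure.restrict_pi_pi,
    ← lintegral_map hg (measurable_pi_apply i), Measure.pi_map_eval, lintegral_smul_measure,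
    Measure.prod_update_apply, hβ, withDensity_apply _ (hs i), smul_eq_mul, mul_comm]
  congr 1
  exact Finset.prod_congr rfl fun j _ => by simp

end UpdatePi

section Channel

open Function

variable {ι : Type*} {𝒳 : ι → Type*} [∀ i, MeasurableSpace (𝒳 i)] {𝒴 : Type*}
  [MeasurableSpace 𝒴] (K : Kernel (∀ i, 𝒳 i) 𝒴) (i : ι)

noncomputable def jointLaw (π : Measure (∀ i, 𝒳 i)) : Measure (𝒳 i × 𝒴) :=
  (π ⊗ₘ K).map fun p => (p.1 i, p.2)

lemma measurable_eval_prod_id : Measurable fun p : (∀ i, 𝒳 i) × 𝒴 => (p.1 i, p.2) := by fun_prop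

instance [IsMarkovKernel K] {π : Measure (∀ i, 𝒳 i)} [IsProbabilityMeasure π] :
    IsProbabilityMeasure (jointLaw K i π) :=
  Measure.isProbabilityMeasure_map (measurable_eval_prod_id i).aemeasurable

variable [IsSFiniteKernel K]

lemma jointLaw_add_smul {a b : ℝ≥0∞} {π π' : Measure (∀ i, 𝒳 i)} [SFinite π] [SFinite π'] :
    jointLaw K i (a • π + b • π') = a • jointLaw K i π + b • jointLaw K i π' := by
  rw [jointLaw, Measure.compProd_add_left, Measure.compProd_smul_left, Measure.compProd_smul_left,
    Measure.map_add _ _ (measurable_eval_prod_id i), Measure.map_smul, Measure.map_smul]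
  rfl

lemma jointLaw_withDensity {π : Measure (∀ i, 𝒳 i)} [SFinite π] {g : 𝒳 i → ℝ≥0∞}
    (hg : Measurable g) :
    jointLaw K i (π.withDensity fun x => g (x i))
      = (jointLaw K i π).withDensity fun z => g z.1 := by
  rw [jointLaw, jointLaw,
    Measure.withDensity_compProd K (by fun_prop : Measurable fun x : ∀ i, 𝒳 i => g (x i))]
  exact Measure.map_withDensity_comp (measurable_eval_prod_id i) (g := fun z : 𝒳 i × 𝒴 => g z.1)
    (by fun_prop)

end Channel

section TimeSharing

open Function

variable {ι : Type*} {𝒳 : ι → Type*} [∀ i, MeasurableSpace (𝒳 i)] {𝒴 : Type*}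
  [MeasurableSpace 𝒴]

noncomputable def channelMI [Fintype ι] (K : Kernel (∀ i, 𝒳 i) 𝒴) (i : ι)
    (α : ∀ i, Measure (𝒳 i)) : ℝ≥0∞ :=
  mutualInfo (jointLaw K i (Measure.pi α))

noncomputable def timeSharing (ε : ℝ) (μ' μ'' : ∀ i, Measure (𝒳 i)) : ∀ i, Measure (𝒳 i) :=
  fun j => ENNReal.ofReal (1 - ε) • μ' j + ENNReal.ofReal ε • μ'' j

lemma isProbabilityMeasure_timeSharing {ε : ℝ} (hε₀ : 0 ≤ ε) (hε₁ : ε ≤ 1)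
    (μ' μ'' : ∀ i, Measure (𝒳 i)) [∀ i, IsProbabilityMeasure (μ' i)]
    [∀ i, IsProbabilityMeasure (μ'' i)] (j : ι) :
    IsProbabilityMeasure (timeSharing ε μ' μ'' j) := by
  constructor
  simp only [timeSharing, Measure.add_apply, Measure.smul_apply, measure_univ, smul_eq_mul,
    mul_one, ← ENNReal.ofReal_add (sub_nonneg.mpr hε₁) hε₀, sub_add_cancel, ENNReal.ofReal_one]

variable [Fintype ι] [DecidableEq ι] {K : Kernel (∀ i, 𝒳 i) 𝒴} [IsMarkovKernel K] {i j : ι}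
  {ε : ℝ} {α : ∀ i, Measure (𝒳 i)} [∀ i, IsProbabilityMeasure (α i)]

section Interferer

variable {β γ : Measure (𝒳 j)} [IsProbabilityMeasure β] [IsProbabilityMeasure γ]

lemma jointLaw_pi_eq_add_of_apply_eq
    (hα : α j = ENNReal.ofReal (1 - ε) • β + ENNReal.ofReal ε • γ) :
    jointLaw K i (Measure.pi α) = ENNReal.ofReal (1 - ε) • jointLaw K i (Measure.pi (update α j β))
      + ENNReal.ofReal ε • jointLaw K i (Measure.pi (update α j γ)) := by
  rw [Measure.pi_eq_add_of_apply_eq hα, jointLaw_add_smul]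

lemma channelMI_update_ne_top (hε₁ : ε < 1)
    (hα : α j = ENNReal.ofReal (1 - ε) • β + ENNReal.ofReal ε • γ) (hfin : channelMI K i α ≠ ⊤) :
    channelMI K i (update α j β) ≠ ⊤ :=
  mutualInfo_ne_top_of_smul_le (sub_pos.mpr hε₁)
    (by rw [jointLaw_pi_eq_add_of_apply_eq hα]; exact Measure.le_add_right le_rfl) hfin

lemma mul_toReal_channelMI_update_sub_binEntropy_le (hε₀ : 0 < ε) (hε₁ : ε < 1)
    (hα : α j = ENNReal.ofReal (1 - ε) • β + ENNReal.ofReal ε • γ) (hfin : channelMI K i α ≠ ⊤) :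
    (1 - ε) * (channelMI K i (update α j β)).toReal - Real.binEntropy ε
      ≤ (channelMI K i α).toReal :=
  mul_toReal_mutualInfo_sub_binEntropy_le hε₀ hε₁ (jointLaw_pi_eq_add_of_apply_eq hα) hfin

end Interferer

section Primary

variable {β γ : Measure (𝒳 i)} [IsProbabilityMeasure β] [IsProbabilityMeasure γ]

lemma jointLaw_pi_update_self_eq_withDensity (hβ : β ≪ α i) :
    jointLaw K i (Measure.pi (update α i β))
      = (jointLaw K i (Measure.pi α)).withDensity fun z => β.rnDeriv (α i) z.1 := by
  rw [Measure.pi_update_eq_withDensity (Measure.measurable_rnDeriv β (α i))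
    (Measure.withDensity_rnDeriv_eq β (α i) hβ).symm,
    jointLaw_withDensity K i (Measure.measurable_rnDeriv β (α i))]

lemma mul_toReal_channelMI_update_self_le (hε₀ : 0 < ε) (hε₁ : ε < 1)
    (hα : α i = ENNReal.ofReal (1 - ε) • β + ENNReal.ofReal ε • γ) (hfin : channelMI K i α ≠ ⊤) :
    (1 - ε) * (channelMI K i (update α i β)).toReal ≤ (channelMI K i α).toReal := by
  have hβ : β ≪ α i := absolutelyContinuous_of_smul_le (c := ENNReal.ofReal (1 - ε))
    (by simpa using hε₁) (by rw [hα]; exact Measure.le_add_right le_rfl)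
  have hγ : γ ≪ α i := absolutelyContinuous_of_smul_le (c := ENNReal.ofReal ε) (by simpa using hε₀)
    (by rw [hα]; exact Measure.le_add_left le_rfl)
  exact mul_toReal_mutualInfo_le_of_withDensity_fst hε₀ hε₁ (jointLaw_pi_eq_add_of_apply_eq hα)
    hfin (Measure.measurable_rnDeriv _ _) (Measure.measurable_rnDeriv _ _)
    (jointLaw_pi_update_self_eq_withDensity hβ) (jointLaw_pi_update_self_eq_withDensity hγ)

end Primary

variable {μ' μ'' : ∀ i, Measure (𝒳 i)} [∀ i, IsProbabilityMeasure (μ' i)]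
  [∀ i, IsProbabilityMeasure (μ'' i)]

lemma channelMI_piecewise_timeSharing (hε₀ : 0 < ε) (hε₁ : ε < 1)
    (hfin : channelMI K i (timeSharing ε μ' μ'') ≠ ⊤) (T : Finset ι) :
    channelMI K i (T.piecewise μ' (timeSharing ε μ' μ'')) ≠ ⊤ ∧
      (1 - ε) ^ T.card * (channelMI K i (T.piecewise μ' (timeSharing ε μ' μ''))).toReal
        - T.card * Real.binEntropy ε ≤ (channelMI K i (timeSharing ε μ' μ'')).toReal := by
  have := isProbabilityMeasure_timeSharing hε₀.le hε₁.le μ' μ''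
  induction T using Finset.induction_on with
  | empty => simp [hfin]
  | @insert j T hjT ih =>
    obtain ⟨hfinT, hT⟩ := ih
    have : ∀ l, IsProbabilityMeasure (T.piecewise μ' (timeSharing ε μ' μ'') l) := fun l =>
      T.piecewise_cases (f := μ') (g := timeSharing ε μ' μ'') (i := l) IsProbabilityMeasure
        inferInstance inferInstance
    have hα : T.piecewise μ' (timeSharing ε μ' μ'') j
        = ENNReal.ofReal (1 - ε) • μ' j + ENNReal.ofReal ε • μ'' j :=
      T.piecewise_eq_of_notMem _ _ hjT
    rw [Finset.piecewise_insert, Finset.card_insert_of_notMem hjT]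
    refine ⟨channelMI_update_ne_top hε₁ hα hfinT, ?_⟩
    have hstep := mul_toReal_channelMI_update_sub_binEntropy_le hε₀ hε₁ hα hfinT
    have hpow : (1 - ε) ^ T.card ≤ 1 := pow_le_one₀ (sub_nonneg.mpr hε₁.le) (by linarith)
    push_cast
    rw [pow_succ]
    nlinarith [mul_le_mul_of_nonneg_left hstep (pow_nonneg (sub_nonneg.mpr hε₁.le) T.card),
      mul_le_of_le_one_left (Real.binEntropy_nonneg hε₀.le hε₁.le) hpow]

lemma pow_mul_toReal_channelMI_sub_binEntropy_le (hε₀ : 0 < ε) (hε₁ : ε < 1)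
    (hfin : channelMI K i (timeSharing ε μ' μ'') ≠ ⊤) :
    (1 - ε) ^ Fintype.card ι * (channelMI K i μ').toReal
      - (Fintype.card ι - 1 : ℝ) * Real.binEntropy ε
      ≤ (channelMI K i (timeSharing ε μ' μ'')).toReal := by
  have := isProbabilityMeasure_timeSharing hε₀.le hε₁.le μ' μ''
  obtain ⟨hfin', hinterferers⟩ := channelMI_piecewise_timeSharing hε₀ hε₁ hfin (Finset.univ.erase i)
  rw [Finset.piecewise_erase_univ] at hfin' hinterferers
  have hprimary := mul_toReal_channelMI_update_self_le
    (α := update μ' i (timeSharing ε μ' μ'' i)) (β := μ' i) (γ := μ'' i) hε₀ hε₁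
    (update_self _ _ _) hfin'
  rw [update_idem, update_eq_self] at hprimary
  have hcard : 0 < Fintype.card ι := Fintype.card_pos_iff.mpr ⟨i⟩
  rw [Finset.card_erase_of_mem (Finset.mem_univ i), Finset.card_univ, Nat.cast_sub hcard,
    Nat.cast_one] at hinterferers
  have hpow : (1 - ε) ^ Fintype.card ι = (1 - ε) ^ (Fintype.card ι - 1) * (1 - ε) := by
    rw [← pow_succ, Nat.sub_add_cancel hcard]
  rw [hpow]
  nlinarith [mul_le_mul_of_nonneg_left hprimary
    (pow_nonneg (sub_nonneg.mpr hε₁.le) (Fintype.card ι - 1))]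

end TimeSharing

lemma binaryEntropy_eq_binEntropy_div_log_two (u : ℝ) :
    binaryEntropy u = Real.binEntropy u / Real.log 2 := by
  simp only [binaryEntropy, Real.binEntropy, Real.logb, Real.log_inv]
  ring

lemma binEntropy_le_binaryEntropy {u : ℝ} (hu₀ : 0 ≤ u) (hu₁ : u ≤ 1) :
    Real.binEntropy u ≤ binaryEntropy u := by
  rw [binaryEntropy_eq_binEntropy_div_log_two]
  exact le_div_self (Real.binEntropy_nonneg hu₀ hu₁) (Real.log_pos one_lt_two)
    (Real.log_two_lt_d9.le.trans (by norm_num))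

theorem timeSharing_interference_bound_general
    {n k : ℕ} [NeZero k] {𝒴 : Type*} [MeasurableSpace 𝒴]
    (K : Kernel (Fin k → (Fin n → ℝ)) 𝒴) [IsMarkovKernel K]
    (ε : ℝ) (hε0 : 0 < ε) (hε1 : ε ≤ 1)
    (μ' μ'' : Fin k → Measure (Fin n → ℝ))
    (hμ' : ∀ i, IsProbabilityMeasure (μ' i)) (hμ'' : ∀ i, IsProbabilityMeasure (μ'' i))
    (hfin : primaryMI K
      (fun i => ENNReal.ofReal (1 - ε) • μ' i + ENNReal.ofReal ε • μ'' i) ≠ ⊤) :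
    (1 - ε) ^ k * (primaryMI K μ').toReal - (k - 1 : ℝ) * binaryEntropy ε ≤
      (primaryMI K
        (fun i => ENNReal.ofReal (1 - ε) • μ' i + ENNReal.ofReal ε • μ'' i)).toReal := by
  rcases hε1.lt_or_eq with hε1 | rfl
  · change (1 - ε) ^ k * (channelMI K 0 μ').toReal - (k - 1 : ℝ) * binaryEntropy ε
      ≤ (channelMI K 0 (timeSharing ε μ' μ'')).toReal
    have h := pow_mul_toReal_channelMI_sub_binEntropy_le (K := K) (i := 0) hε0 hε1 hfin
    rw [Fintype.card_fin] at h
    have hk : (1 : ℝ) ≤ k := by exact_mod_cast NeZero.one_le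
    nlinarith [mul_le_mul_of_nonneg_left (binEntropy_le_binaryEntropy hε0.le hε1.le)
      (sub_nonneg.mpr hk)]
  · simp [binaryEntropy, zero_pow (NeZero.ne k)]

/-- Inequalities (15)–(18) in the proof of Theorem 2.  Each user `i` performs time sharing
between `X_i' ~ μ' i` and `X_i'' ~ μ'' i` driven by independent Bernoulli(ε) variables, so
that the law of the input `X_i` is the mixture `(1 − ε) μ' i + ε μ'' i` and the inputs are
independent.  Then `I(X₁; Y₁) ≥ (1 − ε)^k I(X₁'; Y₁') − (k − 1) H₂(ε)`, where `Y₁` is the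
channel output for the time-sharing inputs and `Y₁'` is the output of the primary channel
`K̄'(·|x₁) = ∫⋯∫ K(·|x₁, x₂, …, x_k) dμ₂'(x₂)⋯dμ_k'(x_k)` with input `X₁' ~ μ₁'`. -/
theorem timeSharing_interference_bound
    {n k : ℕ} [NeZero k] {𝒴 : Type*} [MeasurableSpace 𝒴] [StandardBorelSpace 𝒴]
    (K : Kernel (Fin k → (Fin n → ℝ)) 𝒴) [IsMarkovKernel K]
    (ε : ℝ) (hε0 : 0 < ε) (hε1 : ε ≤ 1)
    (μ' μ'' : Fin k → Measure (Fin n → ℝ))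
    (hμ' : ∀ i, IsProbabilityMeasure (μ' i)) (hμ'' : ∀ i, IsProbabilityMeasure (μ'' i))
    (hfin : primaryMI K
      (fun i => ENNReal.ofReal (1 - ε) • μ' i + ENNReal.ofReal ε • μ'' i) ≠ ⊤)
    (hfin' : primaryMI K μ' ≠ ⊤) :
    (1 - ε) ^ k * (primaryMI K μ').toReal - (k - 1 : ℝ) * binaryEntropy ε ≤
      (primaryMI K
        (fun i => ENNReal.ofReal (1 - ε) • μ' i + ENNReal.ofReal ε • μ'' i)).toReal :=
  timeSharing_interference_bound_general K ε hε0 hε1 μ' μ'' hμ' hμ'' hfin
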